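/- arXiv:math/0006081 — 7 statements merged into one kernel-verified Lean document; each statement's English description precedes it below -/
import Mathlib

section
/- Let G be a topological group and let M be a universal minimal compact G-space. Then the action of G on M is not 3-transitive; that is, it is not the case that M has at least 3 points and for any two triples (a1,a2,a3), (b1,b2,b3) of pairwise distinct points of M there exists g in G with g·a1 = b1, g·a2 = b2 and g·a3 = b3. -/
/-!
In a compact Hausdorff space closed sets are compact, so `Compacts M` with its Vietoris topology
is the hyperspace of closed sets, and the closure `Φ` of the set of maximal chains of closed sets
is a compact `G`-space inside `Compacts (Compacts M)`. Universality gives a `G`-map `f : M → Φ`,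
and `C = f x` is a chain of closed sets invariant under the stabiliser of `x`. If the action were
3-transitive, the stabiliser would act 2-transitively on `M \ {x}`, which forces every member of
`C` to be contained in `{x}` or to contain `M \ {x}`. For two more points `p`, `q` and disjoint
open `U ∋ x`, `V ∋ p`, `W ∋ q`, the chains all of whose members lie in `U` or meet both `V` and `W`
form a neighbourhood of `C`, so one of them is a maximal chain. But a maximal chain leaves `U`
by adding a single point, so it has a member that neither lies in `U` nor meets both `V` and `W`.
-/

open Set TopologicalSpace Pointwise

universe u v

namespace TopologicalSpace.Compacts

section Action

variable {G X : Type*} [Group G] [TopologicalSpace X] [MulAction G X] [ContinuousConstSMul G X]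

instance : SMul G (Compacts X) where
  smul g K := K.map (g • ·) (continuous_const_smul g)

@[simp]
theorem coe_smul (g : G) (K : Compacts X) : (↑(g • K) : Set X) = g • (K : Set X) :=
  rfl

instance : MulAction G (Compacts X) :=
  SetLike.coe_injective.mulAction _ coe_smul

theorem smul_le_smul_iff {g : G} {K L : Compacts X} : g • K ≤ g • L ↔ K ≤ L := by
  simp only [← SetLike.coe_subset_coe, coe_smul, smul_set_subset_smul_set_iff]

def smulOrderIso (g : G) : Compacts X ≃o Compacts X where
  toEquiv := MulAction.toPerm g
  map_rel_iff' := smul_le_smul_iff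

instance : ContinuousConstSMul G (Compacts X) where
  continuous_const_smul g := (continuous_const_smul g).compacts_map

instance [TopologicalSpace G] [ContinuousSMul G X] : ContinuousSMul G (Compacts X) where
  continuous_smul := continuous_snd.compacts_map' (g := fun p : G × Compacts X => (p.1 • ·))
    (continuous_fst.fst.smul continuous_snd)

theorem subset_singleton_or_compl_subset_of_isChain {𝒞 : Set (Compacts X)}
    (h𝒞 : IsChain (· ≤ ·) 𝒞) {x : X} (hinv : ∀ g : G, g • x = x → ∀ A ∈ 𝒞, g • A ∈ 𝒞)
    (hswap : ∀ y z, y ≠ x → z ≠ x → y ≠ z → ∃ g : G, g • x = x ∧ g • y = z ∧ g • z = y)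
    {A : Compacts X} (hA : A ∈ 𝒞) : (A : Set X) ⊆ {x} ∨ {x}ᶜ ⊆ (A : Set X) := by
  by_contra! h
  obtain ⟨y, hyA, hyx⟩ := not_subset.1 h.1
  obtain ⟨z, hzx, hzA⟩ := not_subset.1 h.2
  obtain ⟨g, hgx, hgy, hgz⟩ := hswap y z hyx hzx (ne_of_mem_of_not_mem hyA hzA)
  rcases h𝒞.total hA (hinv g hgx A hA) with hle | hle
  · obtain ⟨w, hwA, hwy⟩ := hle hyA
    exact hzA (smul_left_cancel g (hwy.trans hgz.symm) ▸ hwA)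
  · exact hzA (hle (hgy ▸ smul_mem_smul_set hyA))

end Action

section Chains

variable {X : Type*} [TopologicalSpace X] [T2Space X]

theorem isClosed_setOf_le_or_le :
    IsClosed {p : Compacts X × Compacts X | p.1 ≤ p.2 ∨ p.2 ≤ p.1} := by
  simp only [← sup_eq_right (a := (Prod.fst _ : Compacts X)),
    ← sup_eq_left (a := (Prod.fst _ : Compacts X))]
  exact (isClosed_eq continuous_sup continuous_snd).union
    (isClosed_eq continuous_sup continuous_fst)

theorem isClosed_setOf_isChain :
    IsClosed {C : Compacts (Compacts X) | IsChain (· ≤ ·) (C : Set (Compacts X))} := by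
  have : {C : Compacts (Compacts X) | IsChain (· ≤ ·) (C : Set (Compacts X))} =
      (fun C : Compacts (Compacts X) => (C ×ˢ C : Compacts (Compacts X × Compacts X))) ⁻¹'
        {P | (P : Set _) ⊆ {p : Compacts X × Compacts X | p.1 ≤ p.2 ∨ p.2 ≤ p.1}} := by
    ext C
    simp only [mem_ofPred_eq, mem_preimage, coe_prod, prod_subset_iff]
    exact ⟨fun h A hA B hB => h.total hA hB, fun h A hA B hB _ => h A hA B hB⟩
  rw [this]
  exact (isClosed_subsets_of_isClosed isClosed_setOf_le_or_le).preimage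
    (continuous_prod.comp (continuous_id.prodMk continuous_id))

theorem isClosed_of_isMaxChain {D : Set (Compacts X)} (hD : IsMaxChain (· ≤ ·) D) :
    IsClosed D := by
  have : D = ⋂ A ∈ D, {K | K ≤ A ∨ A ≤ K} := by
    ext K
    simp only [mem_iInter₂, mem_ofPred_eq]
    exact (Flag.ofIsMaxChain D hD).mem_iff_forall_le_or_ge
  rw [this]
  exact isClosed_biInter fun A _ =>
    isClosed_setOf_le_or_le.preimage (continuous_id.prodMk continuous_const)

variable [CompactSpace X]

theorem exists_mem_subset_insert_closure_of_isMaxChain {D : Set (Compacts X)}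
    (hD : IsMaxChain (· ≤ ·) D) {U K : Set X} (hU : U ≠ univ) (hK : IsClosed K)
    (hDK : ∀ S ∈ D, ¬(S : Set X) ⊆ U → ((S : Set X) ∩ K).Nonempty) :
    ∃ b ∈ K, ∃ F ∈ D, b ∈ F ∧ (F : Set X) ⊆ insert b (closure U) := by
  set 𝒰 := {S ∈ D | ¬(S : Set X) ⊆ U}
  have : Nonempty 𝒰 := ⟨⊤, hD.top_mem, by rwa [coe_top, univ_subset_iff]⟩
  obtain ⟨b, hb⟩ : (⋂ S : 𝒰, (S : Set X) ∩ K).Nonempty := by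
    refine IsCompact.nonempty_iInter_of_directed_nonempty_isCompact_isClosed _ ?_
      (fun S => hDK S S.2.1 S.2.2) (fun S => S.1.isCompact.inter_right hK)
      (fun S => S.1.isCompact.isClosed.inter hK)
    intro S T
    rcases hD.isChain.total S.2.1 T.2.1 with h | h
    · exact ⟨S, subset_rfl, inter_subset_inter_left _ h⟩
    · exact ⟨T, inter_subset_inter_left _ h, subset_rfl⟩
  simp only [mem_iInter, mem_inter_iff] at hb
  -- `F` closes up the members inside `U` and adds the point `b` common to all members outside
  -- `U`; being comparable with every member, it is a member.
  set 𝒮 := {S ∈ D | (S : Set X) ⊆ U}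
  let F : Compacts X := ⟨insert b (closure (⋃ S ∈ 𝒮, (S : Set X))),
    isClosed_closure.isCompact.insert b⟩
  refine ⟨b, (hb (Classical.arbitrary _)).2, F, ?_, mem_insert b _,
    insert_subset_insert (closure_mono (iUnion₂_subset fun S hS => hS.2))⟩
  refine (Flag.ofIsMaxChain D hD).mem_iff_forall_le_or_ge.2 fun A hA => ?_
  by_cases hAU : (A : Set X) ⊆ U
  · exact Or.inr <| (subset_biUnion_of_mem (u := fun S : Compacts X => (S : Set X))
      (show A ∈ 𝒮 from ⟨hA, hAU⟩)).trans (subset_closure.trans (subset_insert _ _))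
  · refine Or.inl (insert_subset (hb ⟨A, hA, hAU⟩).1 (closure_minimal ?_ A.isCompact.isClosed))
    exact iUnion₂_subset fun S ⟨hS, hSU⟩ => (hD.isChain.total hS hA).resolve_right
      fun hAS => hAU ((SetLike.coe_subset_coe.2 hAS).trans hSU)

theorem exists_mem_not_subset_singleton_of_mem_closure {C : Compacts (Compacts X)}
    (hC : C ∈ closure {C : Compacts (Compacts X) | IsMaxChain (· ≤ ·) (C : Set (Compacts X))})
    {x p q : X} (hxp : x ≠ p) (hxq : x ≠ q) (hpq : p ≠ q) :
    ∃ A ∈ C, ¬(A : Set X) ⊆ {x} ∧ ¬{x}ᶜ ⊆ (A : Set X) := by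
  obtain ⟨V, hV, hVd⟩ := (toFinite {x, p, q}).t2_separation
  have hdxp : Disjoint (V x) (V p) := hVd (by simp) (by simp) hxp
  have hdxq : Disjoint (V x) (V q) := hVd (by simp) (by simp) hxq
  have hdpq : Disjoint (V p) (V q) := hVd (by simp) (by simp) hpq
  by_contra! h
  set 𝒲 : Set (Compacts X) := {S | (S : Set X) ⊆ V x} ∪
    ({S | ((S : Set X) ∩ V p).Nonempty} ∩ {S | ((S : Set X) ∩ V q).Nonempty})
  have h𝒲 : IsOpen 𝒲 := (isOpen_subsets_of_isOpen (hV x).2).union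
    ((isOpen_inter_nonempty_of_isOpen (hV p).2).inter (isOpen_inter_nonempty_of_isOpen (hV q).2))
  have hC𝒲 : (C : Set (Compacts X)) ⊆ 𝒲 := by
    intro A hA
    by_cases hAx : (A : Set X) ⊆ {x}
    · exact Or.inl (hAx.trans (singleton_subset_iff.2 (hV x).1))
    · have hxA := h A hA hAx
      exact Or.inr ⟨⟨p, hxA hxp.symm, (hV p).1⟩, ⟨q, hxA hxq.symm, (hV q).1⟩⟩
  obtain ⟨D, hD𝒲, hD⟩ := mem_closure_iff.1 hC _ (isOpen_subsets_of_isOpen h𝒲) hC𝒲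
  obtain ⟨b, hb, F, hF, hbF, hFb⟩ := exists_mem_subset_insert_closure_of_isMaxChain hD
    ((ne_univ_iff_exists_notMem _).2 ⟨p, fun hp => disjoint_left.1 hdxp hp (hV p).1⟩)
    isClosed_closure fun S hS hSU =>
      ((hD𝒲 hS).resolve_left hSU).1.mono (inter_subset_inter_right _ subset_closure)
  rcases hD𝒲 hF with hFx | ⟨-, w, hwF, hwq⟩
  · exact disjoint_left.1 (hdxp.symm.closure_left (hV x).2) hb (hFx hbF)
  · rcases hFb hwF with rfl | hw
    · exact disjoint_left.1 (hdpq.closure_left (hV q).2) hb hwq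
    · exact disjoint_left.1 (hdxq.closure_left (hV q).2) hw hwq

end Chains

section MaxChains

variable (G X : Type*) [Group G] [TopologicalSpace X] [MulAction G X] [ContinuousConstSMul G X]

def closureMaxChains : SubMulAction G (Compacts (Compacts X)) where
  carrier := closure {C | IsMaxChain (· ≤ ·) (C : Set (Compacts X))}
  smul_mem' g _ hC :=
    map_mem_closure (continuous_const_smul g) hC fun _ hD => hD.image (smulOrderIso g)

instance [CompactSpace X] : CompactSpace (closureMaxChains G X) :=
  isCompact_iff_compactSpace.1 isClosed_closure.isCompact

instance [T2Space X] [CompactSpace X] : Nonempty (closureMaxChains G X) := by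
  have hD : IsMaxChain (· ≤ ·) (maxChain (· ≤ ·) : Set (Compacts X)) := maxChain_spec
  exact ⟨⟨⟨_, (isClosed_of_isMaxChain hD).isCompact⟩, subset_closure hD⟩⟩

end MaxChains

end TopologicalSpace.Compacts

theorem statement0_general (G : Type u) [Group G] [TopologicalSpace G]
    (M : Type v) [TopologicalSpace M] [CompactSpace M] [T2Space M]
    [MulAction G M] [ContinuousSMul G M]
    (huniv : ∀ (Y : Type v) [TopologicalSpace Y] [CompactSpace Y] [T2Space Y]
      [MulAction G Y] [ContinuousSMul G Y], Nonempty Y →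
      ∃ f : M → Y, Continuous f ∧ ∀ (g : G) (x : M), f (g • x) = g • f x) :
    ¬ ((∃ x y z : M, x ≠ y ∧ x ≠ z ∧ y ≠ z) ∧
      ∀ a₁ a₂ a₃ b₁ b₂ b₃ : M,
        a₁ ≠ a₂ → a₁ ≠ a₃ → a₂ ≠ a₃ → b₁ ≠ b₂ → b₁ ≠ b₃ → b₂ ≠ b₃ →
        ∃ g : G, g • a₁ = b₁ ∧ g • a₂ = b₂ ∧ g • a₃ = b₃) := by
  rintro ⟨⟨x, p, q, hxp, hxq, hpq⟩, htrans⟩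
  obtain ⟨f, -, hf⟩ := huniv (Compacts.closureMaxChains G M) inferInstance
  set C : Compacts (Compacts M) := (f x : Compacts (Compacts M))
  have hinv : ∀ g : G, g • x = x → ∀ A ∈ C, g • A ∈ C := by
    intro g hg A hA
    have hgC : g • C = C := by rw [← SubMulAction.val_smul, ← hf, hg]
    exact hgC ▸ smul_mem_smul_set hA
  obtain ⟨A, hA, hAx, hxA⟩ :=
    Compacts.exists_mem_not_subset_singleton_of_mem_closure (f x).2 hxp hxq hpq
  have hchain : IsChain (· ≤ ·) (C : Set (Compacts M)) :=
    closure_minimal (fun _ hD => hD.isChain) Compacts.isClosed_setOf_isChain (f x).2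
  rcases Compacts.subset_singleton_or_compl_subset_of_isChain hchain hinv
    (fun y z hyx hzx hyz => htrans x y z x z y hyx.symm hzx.symm hyz hzx.symm hyx.symm hyz.symm)
    hA with h | h
  exacts [hAx h, hxA h]

/-- For every topological group `G`, the action of `G` on a universal minimal compact
`G`-space `M` is not 3-transitive. -/
theorem statement0 (G : Type u) [Group G] [TopologicalSpace G] [IsTopologicalGroup G]
    (M : Type v) [TopologicalSpace M] [CompactSpace M] [T2Space M] [Nonempty M]
    [MulAction G M] [ContinuousSMul G M]
    (hmin : ∀ A : Set M, A.Nonempty → IsClosed A →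
      (∀ (g : G), ∀ x ∈ A, g • x ∈ A) → A = Set.univ)
    (huniv : ∀ (Y : Type v) [TopologicalSpace Y] [CompactSpace Y] [T2Space Y]
      [MulAction G Y] [ContinuousSMul G Y], Nonempty Y →
      ∃ f : M → Y, Continuous f ∧ ∀ (g : G) (x : M), f (g • x) = g • f x) :
    ¬ ((∃ x y z : M, x ≠ y ∧ x ≠ z ∧ y ≠ z) ∧
      ∀ a₁ a₂ a₃ b₁ b₂ b₃ : M,
        a₁ ≠ a₂ → a₁ ≠ a₃ → a₂ ≠ a₃ → b₁ ≠ b₂ → b₁ ≠ b₃ → b₂ ≠ b₃ →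
        ∃ g : G, g • a₁ = b₁ ∧ g • a₂ = b₂ ∧ g • a₃ = b₃) :=
  statement0_general G M huniv
end

section
/- Let G be a topological group acting continuously and 3-transitively on a compact Hausdorff space K. Then K is not a universal minimal compact G-space; that is, it is not the case that K is minimal and admits a G-map to every nonempty compact Hausdorff G-space. -/
/-!
A `G`-map `f` from `K` to the orbit closure of a maximal chain `c₀` of nonempty closed subsets of
`K` (a compact `G`-space inside the hyperspace of the hyperspace of `K`) sends `x` to a chain fixed
by the stabiliser of `x`. By 3-transitivity this stabiliser swaps any two points other than `x`, so
every member of `f x` is `{x}` or contains `{x}ᶜ`. Such a chain lies in the open set of chains whose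
members are contained in a neighbourhood of `x` or meet neighbourhoods of two further points `y`,
`z`. As `f x` is a limit of translates of `c₀`, some maximal chain lies in that open set, which is
impossible: a maximal chain of closed sets cannot pass from sets near `x` to sets meeting both
neighbourhoods without a member of neither kind.
-/

universe u v

open Set Pointwise TopologicalSpace

namespace MulAction

variable (G : Type*) {Y : Type*} [Monoid G] [MulAction G Y] [TopologicalSpace Y]
  [ContinuousConstSMul G Y]

def orbitClosure (y : Y) : SubMulAction G Y where
  carrier := closure (orbit G y)
  smul_mem' g _ h := smul_closure_orbit_subset g y (smul_mem_smul_set h)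

instance [CompactSpace Y] (y : Y) : CompactSpace (orbitClosure G y) :=
  isCompact_iff_compactSpace.1 isClosed_closure.isCompact

end MulAction

namespace TopologicalSpace.NonemptyCompacts

variable {X : Type*} [TopologicalSpace X]

section Action

variable {M : Type*} [Monoid M] [MulAction M X] [ContinuousConstSMul M X]

instance : SMul M (NonemptyCompacts X) :=
  ⟨fun g K => K.map (g • ·) (continuous_const_smul g)⟩

@[simp, norm_cast]
theorem coe_smul (g : M) (K : NonemptyCompacts X) :
    ((g • K : NonemptyCompacts X) : Set X) = g • (K : Set X) :=
  image_smul

instance : MulAction M (NonemptyCompacts X) :=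
  SetLike.coe_injective.mulAction _ coe_smul

instance : ContinuousConstSMul M (NonemptyCompacts X) :=
  ⟨fun g => (continuous_const_smul g).nonemptyCompacts_map⟩

instance [TopologicalSpace M] [ContinuousSMul M X] : ContinuousSMul M (NonemptyCompacts X) :=
  ⟨continuous_snd.nonemptyCompacts_map' (g := fun p : M × NonemptyCompacts X => (p.1 • · : X → X))
    (by fun_prop)⟩

end Action

section Group

variable {G : Type*} [Group G] [MulAction G X] [ContinuousConstSMul G X]

def smulOrderIso (g : G) : NonemptyCompacts X ≃o NonemptyCompacts X where
  toEquiv := MulAction.toPerm g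
  map_rel_iff' {A B} := by
    simp only [MulAction.toPerm_apply, ← SetLike.coe_subset_coe, coe_smul,
      smul_set_subset_smul_set_iff]

theorem _root_.IsChain.smul_nonemptyCompacts {c : Set (NonemptyCompacts X)}
    (hc : IsChain (· ≤ ·) c) (g : G) : IsChain (· ≤ ·) (g • c) := by
  rw [← image_smul]
  exact hc.image (smulOrderIso g)

theorem _root_.IsMaxChain.smul_nonemptyCompacts {c : Set (NonemptyCompacts X)}
    (hc : IsMaxChain (· ≤ ·) c) (g : G) : IsMaxChain (· ≤ ·) (g • c) := by
  rw [← image_smul]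
  exact hc.image (smulOrderIso g)

end Group

theorem isClosed_setOf_le [T2Space X] :
    IsClosed {p : NonemptyCompacts X × NonemptyCompacts X | p.1 ≤ p.2} := by
  refine isOpen_compl_iff.1 (isOpen_iff_forall_mem_open.2 fun p hp => ?_)
  obtain ⟨a, ha₁, ha₂⟩ := not_subset.1 hp
  obtain ⟨U, O, hU, hO, haU, hO₂, hUO⟩ := SeparatedNhds.of_isCompact_isCompact
    isCompact_singleton p.2.isCompact (disjoint_singleton_left.2 ha₂)
  refine ⟨{A : NonemptyCompacts X | ((A : Set X) ∩ U).Nonempty} ×ˢ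
    {B : NonemptyCompacts X | (B : Set X) ⊆ O}, ?_,
    (isOpen_inter_nonempty_of_isOpen hU).prod (isOpen_subsets_of_isOpen hO),
    ⟨a, ha₁, haU rfl⟩, hO₂⟩
  rintro ⟨A, B⟩ ⟨⟨b, hbA, hbU⟩, hBO⟩ hAB
  exact disjoint_left.1 hUO hbU (hBO (hAB hbA))

theorem isClosed_setOf_le_or_le [T2Space X] :
    IsClosed {p : NonemptyCompacts X × NonemptyCompacts X | p.1 ≤ p.2 ∨ p.2 ≤ p.1} :=
  isClosed_setOf_le.union (isClosed_setOf_le.preimage continuous_swap)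

theorem isClosed_setOf_forall_mem_forall_mem {R : Set (X × X)} (hR : IsClosed R) :
    IsClosed {C : NonemptyCompacts X | ∀ a ∈ C, ∀ b ∈ C, (a, b) ∈ R} := by
  refine isOpen_compl_iff.1 (isOpen_iff_forall_mem_open.2 fun C hC => ?_)
  simp only [mem_compl_iff, mem_ofPred_eq, not_forall] at hC
  obtain ⟨a, ha, b, hb, hab⟩ := hC
  obtain ⟨u, v, hu, hv, hau, hbv, huv⟩ := isOpen_prod_iff.1 hR.isOpen_compl a b hab
  refine ⟨{C : NonemptyCompacts X | ((C : Set X) ∩ u).Nonempty} ∩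
    {C : NonemptyCompacts X | ((C : Set X) ∩ v).Nonempty}, ?_,
    (isOpen_inter_nonempty_of_isOpen hu).inter (isOpen_inter_nonempty_of_isOpen hv),
    ⟨a, ha, hau⟩, ⟨b, hb, hbv⟩⟩
  rintro C' ⟨⟨a', ha', ha'u⟩, ⟨b', hb', hb'v⟩⟩ hC'
  exact huv ⟨ha'u, hb'v⟩ (hC' a' ha' b' hb')

theorem isClosed_setOf_isChain [T2Space X] :
    IsClosed {C : NonemptyCompacts (NonemptyCompacts X) |
      IsChain (· ≤ ·) (C : Set (NonemptyCompacts X))} := by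
  convert isClosed_setOf_forall_mem_forall_mem (isClosed_setOf_le_or_le (X := X)) using 3 with C
  exact ⟨fun h a ha b hb => h.total ha hb, fun h a ha b hb _ => h a ha b hb⟩

theorem _root_.IsMaxChain.mem_of_forall_ne {α : Type*} {r : α → α → Prop} {c : Set α}
    (hc : IsMaxChain r c) {a : α} (ha : ∀ b ∈ c, a ≠ b → r a b ∨ r b a) : a ∈ c :=
  hc.2 (hc.1.insert ha) (subset_insert a c) ▸ mem_insert a c

theorem _root_.IsMaxChain.isClosed_nonemptyCompacts [T2Space X] {c : Set (NonemptyCompacts X)}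
    (hc : IsMaxChain (· ≤ ·) c) : IsClosed c := by
  have hc_eq : c = ⋂ B ∈ c, {A | A ≤ B ∨ B ≤ A} :=
    Subset.antisymm (fun A hA => mem_iInter₂.2 fun B hB => hc.isChain.total hA hB)
      fun A hA => hc.mem_of_forall_ne fun B hB _ => mem_iInter₂.1 hA B hB
  rw [hc_eq]
  exact isClosed_biInter fun B _ =>
    isClosed_setOf_le_or_le.preimage (continuous_id.prodMk continuous_const)

theorem _root_.IsChain.nonempty_biInter_nonemptyCompacts_inter [T2Space X]
    {s : Set (NonemptyCompacts X)} (hs : IsChain (· ≤ ·) s) (hne : s.Nonempty) {F : Set X}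
    (hF : IsClosed F) (h : ∀ A ∈ s, ((A : Set X) ∩ F).Nonempty) :
    ((⋂ A ∈ s, (A : Set X)) ∩ F).Nonempty := by
  have : Nonempty s := hne.to_subtype
  have hdir : Directed (· ⊇ ·) fun A : s => (A : Set X) ∩ F := fun A B =>
    (hs.total A.2 B.2).elim (fun hAB => ⟨A, subset_rfl, inter_subset_inter_left F hAB⟩)
      fun hBA => ⟨B, inter_subset_inter_left F hBA, subset_rfl⟩
  have := IsCompact.nonempty_iInter_of_directed_nonempty_isCompact_isClosed _ hdir
    (fun A => h A A.2) (fun A => A.1.isCompact.inter_right hF)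
    (fun A => A.1.isCompact.isClosed.inter hF)
  rwa [biInter_eq_iInter, iInter_inter]

/-- A maximal chain of nonempty compact sets cannot jump from sets inside `U` to sets meeting both
`V` and `W`: the closure of the union of the former, together with the trace on `closure W` of the
intersection of the latter, is comparable with every member but is of neither kind. -/
theorem _root_.IsMaxChain.not_forall_subset_or_meets [CompactSpace X] [T2Space X]
    {c : Set (NonemptyCompacts X)} (hc : IsMaxChain (· ≤ ·) c) {U V W : Set X} (hU : IsOpen U)
    (hV : IsOpen V) (hUV : Disjoint U V) (hUW : Disjoint U W) (hVW : Disjoint V W)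
    (hVne : V.Nonempty) (hWne : W.Nonempty) :
    ¬ ∀ A ∈ c, (A : Set X) ⊆ U ∨ (((A : Set X) ∩ V).Nonempty ∧ ((A : Set X) ∩ W).Nonempty) := by
  intro H
  have : Nonempty X := ⟨hVne.some⟩
  set small := {A ∈ c | (A : Set X) ⊆ U}
  set big := {A ∈ c | ((A : Set X) ∩ V).Nonempty ∧ ((A : Set X) ∩ W).Nonempty}
  have small_le_big : ∀ A ∈ small, ∀ B ∈ big, A ≤ B := by
    intro A hA B hB
    refine (hc.isChain.total hA.1 hB.1).resolve_right fun hBA => ?_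
    obtain ⟨v, hvB, hvV⟩ := hB.2.1
    exact disjoint_left.1 hUV (hA.2 (hBA hvB)) hvV
  set D := ⋂ B ∈ big, (B : Set X)
  have hDW : (D ∩ closure W).Nonempty := by
    have htop : ⊤ ∈ big := ⟨hc.top_mem, by simpa using hVne, by simpa using hWne⟩
    exact (hc.isChain.mono (sep_subset c _)).nonempty_biInter_nonemptyCompacts_inter ⟨⊤, htop⟩
      isClosed_closure fun B hB => hB.2.2.mono (inter_subset_inter_right _ subset_closure)
  set E := closure (⋃ A ∈ small, (A : Set X))
  have hF_closed : IsClosed (E ∪ D ∩ closure W) :=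
    isClosed_closure.union ((isClosed_biInter fun B _ => B.isCompact.isClosed).inter
      isClosed_closure)
  let F : NonemptyCompacts X := ⟨⟨_, hF_closed.isCompact⟩, hDW.mono subset_union_right⟩
  have hF : F ∈ c := hc.mem_of_forall_ne fun C hC _ => by
    refine (H C hC).symm.imp (fun hCbig => ?_) fun hCU => ?_
    · show E ∪ D ∩ closure W ⊆ C
      refine union_subset (closure_minimal (iUnion₂_subset fun A hA => ?_) C.isCompact.isClosed)
        (inter_subset_left.trans (biInter_subset_of_mem (show C ∈ big from ⟨hC, hCbig⟩)))
      exact small_le_big A hA C ⟨hC, hCbig⟩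
    · exact ((subset_biUnion_of_mem (u := fun A : NonemptyCompacts X => (A : Set X))
        (show C ∈ small from ⟨hC, hCU⟩)).trans subset_closure).trans subset_union_left
  rcases H F hF with hFU | ⟨⟨v, hvF, hvV⟩, -⟩
  · obtain ⟨w, hwD, hwW⟩ := hDW
    exact disjoint_left.1 (hUW.closure_right hU) (hFU (Or.inr ⟨hwD, hwW⟩)) hwW
  · rcases hvF with hvE | ⟨-, hvW⟩
    · exact disjoint_left.1 (hUV.closure_left hV)
        (closure_mono (iUnion₂_subset fun A hA => hA.2) hvE) hvV
    · exact disjoint_left.1 (hVW.closure_right hV) hvV hvW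

section Swap

variable {G : Type*} [Group G] [MulAction G X] [ContinuousConstSMul G X]
  {C : Set (NonemptyCompacts X)}

theorem _root_.IsChain.mem_of_smul_swap (hC : IsChain (· ≤ ·) C) {g : G}
    (hg : ∀ A ∈ C, g • A ∈ C) {A : NonemptyCompacts X} (hA : A ∈ C) {p q : X}
    (hgp : g • p = q) (hgq : g • q = p) (hp : p ∈ A) : q ∈ A := by
  rcases hC.total hA (hg A hA) with hle | hle
  · have : g • q ∈ g • (A : Set X) := by
      rw [hgq, ← coe_smul]
      exact hle hp
    exact smul_mem_smul_set_iff.1 this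
  · have : g • p ∈ ((g • A : NonemptyCompacts X) : Set X) := by
      rw [coe_smul]
      exact smul_mem_smul_set hp
    exact hle (hgp ▸ this)

theorem _root_.IsChain.subset_singleton_or_compl_subset (hC : IsChain (· ≤ ·) C) {x : X}
    (hfix : ∀ g : G, g • x = x → ∀ A ∈ C, g • A ∈ C)
    (hswap : ∀ p q, p ≠ x → q ≠ x → p ≠ q → ∃ g : G, g • x = x ∧ g • p = q ∧ g • q = p)
    {A : NonemptyCompacts X} (hA : A ∈ C) : (A : Set X) ⊆ {x} ∨ ({x}ᶜ : Set X) ⊆ A := by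
  refine or_iff_not_imp_left.2 fun hA_sub q hqx => ?_
  obtain ⟨p, hpA, hpx⟩ := not_subset.1 hA_sub
  rcases eq_or_ne p q with rfl | hpq
  · exact hpA
  obtain ⟨g, hgx, hgp, hgq⟩ := hswap p q hpx hqx hpq
  exact hC.mem_of_smul_swap (hfix g hgx) hA hgp hgq hpA

end Swap

theorem _root_.IsChain.of_mem_orbitClosure {G X : Type*} [Group G] [TopologicalSpace X] [T2Space X]
    [MulAction G X] [ContinuousConstSMul G X] {c C : NonemptyCompacts (NonemptyCompacts X)}
    (hc : IsChain (· ≤ ·) (c : Set (NonemptyCompacts X))) (hC : C ∈ MulAction.orbitClosure G c) :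
    IsChain (· ≤ ·) (C : Set (NonemptyCompacts X)) := by
  refine closure_minimal ?_ isClosed_setOf_isChain hC
  rintro _ ⟨g, rfl⟩
  rw [mem_ofPred_eq, coe_smul]
  exact hc.smul_nonemptyCompacts g

theorem _root_.IsMaxChain.not_forall_subset_singleton_or_compl_subset_of_mem_orbitClosure
    {G X : Type*} [Group G] [TopologicalSpace X] [CompactSpace X] [T2Space X] [MulAction G X]
    [ContinuousConstSMul G X] {c C : NonemptyCompacts (NonemptyCompacts X)}
    (hc : IsMaxChain (· ≤ ·) (c : Set (NonemptyCompacts X)))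
    (hC : C ∈ MulAction.orbitClosure G c) {x y z : X} (hxy : x ≠ y) (hxz : x ≠ z) (hyz : y ≠ z) :
    ¬ ∀ A ∈ C, (A : Set X) ⊆ {x} ∨ ({x}ᶜ : Set X) ⊆ A := by
  intro hC_sub
  obtain ⟨N, hN, hNdisj⟩ := (toFinite {x, y, z}).t2_separation
  let 𝒮 : Set (NonemptyCompacts X) := {A | (A : Set X) ⊆ N x} ∪
    ({A | ((A : Set X) ∩ N y).Nonempty} ∩ {A | ((A : Set X) ∩ N z).Nonempty})
  have h𝒮 : IsOpen 𝒮 := (isOpen_subsets_of_isOpen (hN x).2).union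
    ((isOpen_inter_nonempty_of_isOpen (hN y).2).inter (isOpen_inter_nonempty_of_isOpen (hN z).2))
  have hC𝒮 : (C : Set (NonemptyCompacts X)) ⊆ 𝒮 := fun A hA =>
    (hC_sub A hA).imp (fun h => h.trans (singleton_subset_iff.2 (hN x).1))
      fun h => ⟨⟨y, h hxy.symm, (hN y).1⟩, ⟨z, h hxz.symm, (hN z).1⟩⟩
  obtain ⟨_, hg𝒮, g, rfl⟩ := mem_closure_iff.1 hC _ (isOpen_subsets_of_isOpen h𝒮) hC𝒮
  rw [mem_ofPred_eq, coe_smul] at hg𝒮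
  exact (hc.smul_nonemptyCompacts g).not_forall_subset_or_meets (hN x).2 (hN y).2
    (hNdisj (by simp) (by simp) hxy) (hNdisj (by simp) (by simp) hxz)
    (hNdisj (by simp) (by simp) hyz) ⟨y, (hN y).1⟩ ⟨z, (hN z).1⟩ fun A hA => hg𝒮 hA

end TopologicalSpace.NonemptyCompacts

theorem statement1_general (G : Type u) [Group G] [TopologicalSpace G]
    (K : Type v) [TopologicalSpace K] [CompactSpace K] [T2Space K] [Nonempty K]
    [MulAction G K] [ContinuousSMul G K]
    (h3 : (∃ x y z : K, x ≠ y ∧ x ≠ z ∧ y ≠ z) ∧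
      ∀ a₁ a₂ a₃ b₁ b₂ b₃ : K,
        a₁ ≠ a₂ → a₁ ≠ a₃ → a₂ ≠ a₃ → b₁ ≠ b₂ → b₁ ≠ b₃ → b₂ ≠ b₃ →
        ∃ g : G, g • a₁ = b₁ ∧ g • a₂ = b₂ ∧ g • a₃ = b₃) :
    ¬ ((∀ A : Set K, A.Nonempty → IsClosed A →
        (∀ (g : G), ∀ x ∈ A, g • x ∈ A) → A = Set.univ) ∧
      (∀ (Y : Type v) [TopologicalSpace Y] [CompactSpace Y] [T2Space Y]
        [MulAction G Y] [ContinuousSMul G Y], Nonempty Y →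
        ∃ f : K → Y, Continuous f ∧ ∀ (g : G) (x : K), f (g • x) = g • f x)) := by
  rintro ⟨-, huniv⟩
  obtain ⟨⟨x, y, z, hxy, hxz, hyz⟩, htrans⟩ := h3
  have hc₀ := maxChain_spec (r := ((· ≤ ·) : NonemptyCompacts K → NonemptyCompacts K → Prop))
  let c₀ : NonemptyCompacts (NonemptyCompacts K) :=
    ⟨⟨_, hc₀.isClosed_nonemptyCompacts.isCompact⟩, ⊤, hc₀.top_mem⟩
  obtain ⟨f, -, hf⟩ := huniv (MulAction.orbitClosure G c₀)
    ⟨⟨c₀, subset_closure (MulAction.mem_orbit_self c₀)⟩⟩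
  let cx : NonemptyCompacts (NonemptyCompacts K) := f x
  refine hc₀.not_forall_subset_singleton_or_compl_subset_of_mem_orbitClosure (f x).2 hxy hxz hyz
    fun A hA => (hc₀.isChain.of_mem_orbitClosure (f x).2).subset_singleton_or_compl_subset
      (fun g hg B hB => ?_) (fun p q hpx hqx hpq => htrans x p q x q p
        hpx.symm hqx.symm hpq hqx.symm hpx.symm hpq.symm) hA
  have hg_cx : g • cx = cx := by rw [← SubMulAction.val_smul, ← hf, hg]
  change g • B ∈ (cx : Set (NonemptyCompacts K))
  rw [← hg_cx, NonemptyCompacts.coe_smul]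
  exact smul_mem_smul_set hB

/-- If a topological group `G` acts continuously and 3-transitively on a compact Hausdorff
space `K`, then `K` is not a universal minimal compact `G`-space. -/
theorem statement1 (G : Type u) [Group G] [TopologicalSpace G] [IsTopologicalGroup G]
    (K : Type v) [TopologicalSpace K] [CompactSpace K] [T2Space K] [Nonempty K]
    [MulAction G K] [ContinuousSMul G K]
    (h3 : (∃ x y z : K, x ≠ y ∧ x ≠ z ∧ y ≠ z) ∧
      ∀ a₁ a₂ a₃ b₁ b₂ b₃ : K,
        a₁ ≠ a₂ → a₁ ≠ a₃ → a₂ ≠ a₃ → b₁ ≠ b₂ → b₁ ≠ b₃ → b₂ ≠ b₃ →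
        ∃ g : G, g • a₁ = b₁ ∧ g • a₂ = b₂ ∧ g • a₃ = b₃) :
    ¬ ((∀ A : Set K, A.Nonempty → IsClosed A →
        (∀ (g : G), ∀ x ∈ A, g • x ∈ A) → A = Set.univ) ∧
      (∀ (Y : Type v) [TopologicalSpace Y] [CompactSpace Y] [T2Space Y]
        [MulAction G Y] [ContinuousSMul G Y], Nonempty Y →
        ∃ f : K → Y, Continuous f ∧ ∀ (g : G) (x : K), f (g • x) = g • f x)) :=
  statement1_general G K h3
end

section
/- Let K be a T1 topological space and let C be a maximal chain of nonempty closed subsets of K. Suppose F1, F2 ∈ C are such that F1 ⊆ F2 and every F ∈ C satisfies either F ⊆ F1 or F2 ⊆ F. Then the set difference F2 \ F1 contains at most one point. -/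
/-!
If `x ≠ y` both lay in `F₂ \ F₁`, the closed set `F₁ ∪ {x}` (closed because points are closed)
would be comparable with every member of the chain, since each member lies below `F₁` or above
`F₂`. Maximality puts it in the chain, so it lies below `F₁` or above `F₂`; the first is
impossible as `x ∉ F₁`, the second as `y ∉ F₁ ∪ {x}`.
-/

universe u

theorem mem_of_maximal_of_forall_comparable {α : Type*} {r : α → α → Prop} {P : α → Prop}
    {C : Set α} (hC : ∀ a ∈ C, P a) (hchain : IsChain r C)
    (hmax : ∀ C' : Set α, (∀ a ∈ C', P a) → IsChain r C' → C ⊆ C' → C' = C)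
    {a : α} (ha : P a) (hcomp : ∀ b ∈ C, a ≠ b → r a b ∨ r b a) : a ∈ C := by
  have hins : insert a C = C :=
    hmax _ (Set.forall_mem_insert.2 ⟨ha, hC⟩) (hchain.insert hcomp) (Set.subset_insert a C)
  exact hins ▸ Set.mem_insert a C

theorem insert_mem_of_gap {K : Type u} [TopologicalSpace K] [T1Space K]
    {C : Set (Set K)} (hC : ∀ F ∈ C, F.Nonempty ∧ IsClosed F)
    (hchain : IsChain (· ⊆ ·) C)
    (hmax : ∀ C' : Set (Set K), (∀ F ∈ C', F.Nonempty ∧ IsClosed F) →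
      IsChain (· ⊆ ·) C' → C ⊆ C' → C' = C)
    {F₁ F₂ : Set K} (h₁ : F₁ ∈ C) (hgap : ∀ F ∈ C, F ⊆ F₁ ∨ F₂ ⊆ F)
    {x : K} (hx : x ∈ F₂) (h₁₂ : F₁ ⊆ F₂) : insert x F₁ ∈ C := by
  have hclosed : IsClosed (insert x F₁) := by
    simpa only [Set.insert_eq] using isClosed_singleton.union (hC F₁ h₁).2
  refine mem_of_maximal_of_forall_comparable hC hchain hmax ⟨Set.insert_nonempty x F₁, hclosed⟩
    fun F hF _ => ?_
  rcases hgap F hF with hF₁ | hF₂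
  · exact Or.inr (hF₁.trans (Set.subset_insert x F₁))
  · exact Or.inl ((Set.insert_subset hx h₁₂).trans hF₂)

theorem statement6_general (K : Type u) [TopologicalSpace K] [T1Space K]
    (C : Set (Set K)) (hC : ∀ F ∈ C, F.Nonempty ∧ IsClosed F)
    (hchain : IsChain (· ⊆ ·) C)
    (hmax : ∀ C' : Set (Set K), (∀ F ∈ C', F.Nonempty ∧ IsClosed F) →
      IsChain (· ⊆ ·) C' → C ⊆ C' → C' = C)
    (F₁ F₂ : Set K) (h₁ : F₁ ∈ C) (h₁₂ : F₁ ⊆ F₂)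
    (hgap : ∀ F ∈ C, F ⊆ F₁ ∨ F₂ ⊆ F) :
    (F₂ \ F₁).Subsingleton := by
  intro x hx y hy
  have hmem := insert_mem_of_gap hC hchain hmax h₁ hgap hx.1 h₁₂
  rcases hgap _ hmem with hle | hge
  · exact absurd (hle (Set.mem_insert x F₁)) hx.2
  · rcases hge hy.1 with hyx | hyF₁
    · exact hyx.symm
    · exact absurd hyF₁ hy.2

/-- In a T1 space, a "gap" in a maximal chain of nonempty closed subsets contains at most
one point. -/
theorem statement6 (K : Type u) [TopologicalSpace K] [T1Space K]
    (C : Set (Set K)) (hC : ∀ F ∈ C, F.Nonempty ∧ IsClosed F)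
    (hchain : IsChain (· ⊆ ·) C)
    (hmax : ∀ C' : Set (Set K), (∀ F ∈ C', F.Nonempty ∧ IsClosed F) →
      IsChain (· ⊆ ·) C' → C ⊆ C' → C' = C)
    (F₁ F₂ : Set K) (h₁ : F₁ ∈ C) (h₂ : F₂ ∈ C) (h₁₂ : F₁ ⊆ F₂)
    (hgap : ∀ F ∈ C, F ⊆ F₁ ∨ F₂ ⊆ F) :
    (F₂ \ F₁).Subsingleton :=
  statement6_general K C hC hchain hmax F₁ F₂ h₁ h₁₂ hgap
end

section
/- Let K be a nonempty compact Hausdorff space and let C be a maximal chain of nonempty closed subsets of K. Then K itself belongs to C, the intersection ⋂C of all members of C belongs to C, and ⋂C is a singleton. -/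
/-!
By maximality, every nonempty closed set comparable with all members of `C` already lies in `C`.
This applies to `K`, and, by compactness (finite intersection property), to the nonempty set `⋂₀ C`;
then it applies to `{x}` for any `x ∈ ⋂₀ C`, which forces `⋂₀ C = {x}`.
-/

universe u

open Set

theorem mem_of_forall_comparable_of_maximal {α : Type*} {r : α → α → Prop} {P : α → Prop}
    {C : Set α} (hC : ∀ a ∈ C, P a) (hchain : IsChain r C)
    (hmax : ∀ C' : Set α, (∀ a ∈ C', P a) → IsChain r C' → C ⊆ C' → C' = C)
    {s : α} (hs : P s) (hcomp : ∀ a ∈ C, r s a ∨ r a s) : s ∈ C := by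
  have hins : insert s C = C :=
    hmax _ (forall_mem_insert.2 ⟨hs, hC⟩) (hchain.insert fun a ha _ ↦ hcomp a ha)
      (subset_insert _ _)
  exact hins ▸ mem_insert s C

theorem sInter_nonempty_of_isChain {K : Type*} [TopologicalSpace K] [CompactSpace K]
    {C : Set (Set K)} (hC : ∀ F ∈ C, F.Nonempty ∧ IsClosed F) (hchain : IsChain (· ⊆ ·) C)
    (hne : C.Nonempty) : (⋂₀ C).Nonempty :=
  have : Nonempty C := hne.to_subtype
  have hchain' : IsChain (· ⊇ ·) C := hchain.symm
  IsCompact.nonempty_sInter_of_directed_nonempty_isCompact_isClosed hchain'.directedOn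
    (fun F hF ↦ (hC F hF).1) (fun F hF ↦ (hC F hF).2.isCompact) (fun F hF ↦ (hC F hF).2)

/-- A maximal chain `C` of nonempty closed subsets of a nonempty compact Hausdorff space `K`
contains `K` itself, contains the intersection of all its members, and that intersection is
a singleton. -/
theorem statement7 (K : Type u) [TopologicalSpace K] [CompactSpace K] [T2Space K] [Nonempty K]
    (C : Set (Set K)) (hC : ∀ F ∈ C, F.Nonempty ∧ IsClosed F)
    (hchain : IsChain (· ⊆ ·) C)
    (hmax : ∀ C' : Set (Set K), (∀ F ∈ C', F.Nonempty ∧ IsClosed F) →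
      IsChain (· ⊆ ·) C' → C ⊆ C' → C' = C) :
    Set.univ ∈ C ∧ ⋂₀ C ∈ C ∧ ∃ x : K, ⋂₀ C = {x} := by
  have mem_of_subset_sInter : ∀ S : Set K, S.Nonempty → IsClosed S → S ⊆ ⋂₀ C → S ∈ C :=
    fun S hSne hScl hS ↦ mem_of_forall_comparable_of_maximal hC hchain hmax ⟨hSne, hScl⟩
      fun F hF ↦ Or.inl (hS.trans (sInter_subset_of_mem hF))
  have huniv : univ ∈ C := mem_of_forall_comparable_of_maximal hC hchain hmax
    ⟨univ_nonempty, isClosed_univ⟩ fun F _ ↦ Or.inr (subset_univ F)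
  obtain ⟨x, hx⟩ := sInter_nonempty_of_isChain hC hchain ⟨univ, huniv⟩
  have hInter : ⋂₀ C ∈ C := mem_of_subset_sInter _ ⟨x, hx⟩
    (isClosed_sInter fun F hF ↦ (hC F hF).2) subset_rfl
  have hx_mem : {x} ∈ C :=
    mem_of_subset_sInter _ (singleton_nonempty x) isClosed_singleton (singleton_subset_iff.2 hx)
  exact ⟨huniv, hInter, x, (sInter_subset_of_mem hx_mem).antisymm (singleton_subset_iff.2 hx)⟩
end

section
/- Let G be a topological group and let M and M' both be universal minimal compact G-spaces. Then there exists a G-equivariant homeomorphism from M onto M'. -/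
/-!
Given `G`-maps `f : M → M'` and `f' : M' → M`, the map `f` is onto because `M'` is minimal, and it
is injective because every `G`-endomorphism `φ` of a universal minimal space is injective. For the
latter, take a minimal left ideal `I` of the Ellis enveloping semigroup `E ⊆ M^M`, the closure of the
translations. It is a compact `G`-space, and a `G`-endomorphism `ρ` of `I` commutes with left
multiplication by the dense set of translations, hence by all of `E`; so `ρ q = ρ (q * u) = q * ρ u`
for an idempotent `u ∈ I` (Ellis–Numakura), and right multiplication by an element of `I` is
injective on `I`. Evaluation at a point maps `I` onto `M`, and composing with a `G`-map `M → I`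
turns `φ` into such a `ρ`.
-/

open Set Function

section MinimalLeftIdeal

variable {S : Type*} [Semigroup S]

/-- For nonempty `I`, the condition `S * q = I` for all `q ∈ I` is equivalent to `I` being a
minimal left ideal. -/
def IsMinimalLeftIdeal (I : Set S) : Prop :=
  I.Nonempty ∧ ∀ q ∈ I, range (· * q) = I

namespace IsMinimalLeftIdeal

variable {I : Set S}

theorem mul_mem (hI : IsMinimalLeftIdeal I) (p : S) {q : S} (hq : q ∈ I) : p * q ∈ I :=
  hI.2 q hq ▸ mem_range_self p

theorem mul_eq_left_of_isIdempotentElem (hI : IsMinimalLeftIdeal I) {u p : S} (hu : u ∈ I)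
    (huu : IsIdempotentElem u) (hp : p ∈ I) : p * u = p := by
  obtain ⟨r, rfl⟩ : p ∈ range (· * u) := (hI.2 u hu).symm ▸ hp
  rw [mul_assoc, huu.eq]

variable [TopologicalSpace S]

theorem isCompact [CompactSpace S] (hI : IsMinimalLeftIdeal I)
    (hS : ∀ r : S, Continuous (· * r)) : IsCompact I :=
  hI.1.elim fun q hq => hI.2 q hq ▸ isCompact_range (hS q)

variable [CompactSpace S] [T2Space S]

theorem exists_isIdempotentElem (hI : IsMinimalLeftIdeal I) (hS : ∀ r : S, Continuous (· * r)) :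
    ∃ u ∈ I, IsIdempotentElem u :=
  exists_idempotent_in_compact_subsemigroup hS I hI.1 (hI.isCompact hS)
    fun p _ _ hq => hI.mul_mem p hq

theorem injOn_mul_left (hI : IsMinimalLeftIdeal I) (hS : ∀ r : S, Continuous (· * r)) {v : S}
    (hv : v ∈ I) : InjOn (· * v) I := by
  obtain ⟨u, hu, huu⟩ := hI.exists_isIdempotentElem hS
  obtain ⟨r, hr⟩ : u ∈ range (· * (u * v)) := (hI.2 _ (hI.mul_mem u hv)).symm ▸ hu
  have hwv : r * u * v = u := by simpa only [mul_assoc] using hr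
  set w := r * u
  have hvw_mem : v * w ∈ I := hI.mul_mem v (hI.mul_mem r hu)
  have hvw : IsIdempotentElem (v * w) := by
    rw [IsIdempotentElem, mul_assoc, ← mul_assoc w, hwv, ← mul_assoc,
      hI.mul_eq_left_of_isIdempotentElem hu huu hv]
  intro q hq q' hq' h
  calc q = q * v * w := by rw [mul_assoc, hI.mul_eq_left_of_isIdempotentElem hvw_mem hvw hq]
    _ = q' * v * w := congrArg (· * w) h
    _ = q' := by rw [mul_assoc, hI.mul_eq_left_of_isIdempotentElem hvw_mem hvw hq']

end IsMinimalLeftIdeal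

theorem exists_isMinimalLeftIdeal [TopologicalSpace S] [CompactSpace S] [T2Space S] [Nonempty S]
    (hS : ∀ r : S, Continuous (· * r)) : ∃ I : Set S, IsMinimalLeftIdeal I := by
  let C : Set (Set S) := {A | A.Nonempty ∧ IsClosed A ∧ ∀ p, ∀ q ∈ A, p * q ∈ A}
  have hchain : ∀ c ⊆ C, IsChain (· ⊆ ·) c → c.Nonempty → ∃ lb ∈ C, ∀ A ∈ c, lb ⊆ A := by
    intro c hcC hc hcne
    have : Nonempty c := hcne.to_subtype
    refine ⟨⋂₀ c, ⟨?_, isClosed_sInter fun A hA => (hcC hA).2.1, ?_⟩,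
      fun _ => sInter_subset_of_mem⟩
    · exact IsCompact.nonempty_sInter_of_directed_nonempty_isCompact_isClosed
        (fun A hA B hB => (hc.total hA hB).elim (fun h => ⟨A, hA, subset_rfl, h⟩)
          fun h => ⟨B, hB, h, subset_rfl⟩)
        (fun A hA => (hcC hA).1) (fun A hA => (hcC hA).2.1.isCompact) (fun A hA => (hcC hA).2.1)
    · exact fun p q hq => mem_sInter.2 fun A hA => (hcC hA).2.2 p q (hq A hA)
  obtain ⟨I, -, hImin⟩ :=
    zorn_superset_nonempty C hchain univ ⟨univ_nonempty, isClosed_univ, fun _ _ _ => trivial⟩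
  obtain ⟨hIne, -, hIideal⟩ := hImin.prop
  refine ⟨I, hIne, fun q hq => hImin.eq_of_subset ⟨range_nonempty _,
    (isCompact_range (hS q)).isClosed, ?_⟩ (range_subset_iff.2 fun p => hIideal p q hq)⟩
  rintro p _ ⟨r, rfl⟩
  exact ⟨p * r, mul_assoc p r q⟩

end MinimalLeftIdeal

namespace IsMinimalLeftIdeal

variable {G S : Type*} [Monoid G] [Monoid S] [MulAction G S] [IsScalarTower G S S] {I : Set S}

theorem smul_mem (hI : IsMinimalLeftIdeal I) (g : G) {q : S} (hq : q ∈ I) : g • q ∈ I := by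
  rw [← one_mul q, ← smul_mul_assoc]
  exact hI.mul_mem _ hq

variable (G) in
def toSubMulAction (hI : IsMinimalLeftIdeal I) : SubMulAction G S :=
  ⟨I, fun g _ hq => hI.smul_mem g hq⟩

theorem injective_of_equivariant [TopologicalSpace S] [CompactSpace S] [T2Space S]
    (hS : ∀ r : S, Continuous (· * r)) (hdense : Dense (MulAction.orbit G (1 : S)))
    (hI : IsMinimalLeftIdeal I) (ρ : hI.toSubMulAction G → hI.toSubMulAction G)
    (hρ : Continuous ρ) (hρG : ∀ (g : G) q, ρ (g • q) = g • ρ q) : Injective ρ := by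
  have hcomm (p : S) (q : hI.toSubMulAction G) :
      (ρ ⟨p * q, hI.mul_mem p q.2⟩ : S) = p * ρ q := by
    refine congrFun (Continuous.ext_on hdense (f := fun p => (ρ ⟨p * q, hI.mul_mem p q.2⟩ : S))
      (continuous_subtype_val.comp (hρ.comp ((hS q).subtype_mk _))) (hS _) ?_) p
    rintro _ ⟨g, rfl⟩
    have hq : (⟨(g • (1 : S)) * q, hI.mul_mem _ q.2⟩ : hI.toSubMulAction G) = g • q :=
      Subtype.ext (show g • (1 : S) * q = g • (q : S) by rw [smul_mul_assoc, one_mul])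
    dsimp only
    rw [hq, hρG, smul_mul_assoc, one_mul]
    rfl
  obtain ⟨u, hu, huu⟩ := hI.exists_isIdempotentElem hS
  have hρ_eq (q : hI.toSubMulAction G) : (ρ q : S) = q * ρ ⟨u, hu⟩ := by
    rw [← hcomm]
    congr 2
    exact Subtype.ext (hI.mul_eq_left_of_isIdempotentElem hu huu q.2).symm
  intro q q' h
  exact Subtype.ext <| hI.injOn_mul_left hS (ρ ⟨u, hu⟩).2 q.2 q'.2 <| by
    simp only [← hρ_eq, h]

end IsMinimalLeftIdeal

theorem surjective_of_equivariant_of_minimal {G X Y : Type*} [TopologicalSpace X]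
    [CompactSpace X] [Nonempty X] [TopologicalSpace Y] [T2Space Y] [SMul G X] [SMul G Y]
    (hmin : ∀ A : Set Y, A.Nonempty → IsClosed A → (∀ (g : G), ∀ y ∈ A, g • y ∈ A) → A = univ)
    {f : X → Y} (hf : Continuous f) (hfG : ∀ (g : G) x, f (g • x) = g • f x) : Surjective f := by
  refine range_eq_univ.1 (hmin _ (range_nonempty f) (isCompact_range hf).isClosed ?_)
  rintro g _ ⟨x, rfl⟩
  exact ⟨g • x, hfG g x⟩

section Enveloping

variable (G M : Type*) [Monoid G] [TopologicalSpace M] [MulAction G M]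

/-- The Ellis enveloping semigroup: `MulAction.orbit G id` is the set of translations `(g • ·)`,
and `M → M` carries the product topology. -/
def envelopingSemigroup : Set (M → M) :=
  closure (MulAction.orbit G id)

variable {G M}

namespace envelopingSemigroup

theorem smul_mem [ContinuousConstSMul G M] (g : G) {p : M → M}
    (hp : p ∈ envelopingSemigroup G M) : g • p ∈ envelopingSemigroup G M :=
  map_mem_closure (continuous_const_smul g) hp fun _ => MulAction.mem_orbit_of_mem_orbit g

theorem comp_mem [ContinuousConstSMul G M] {p q : M → M} (hp : p ∈ envelopingSemigroup G M)
    (hq : q ∈ envelopingSemigroup G M) : p ∘ q ∈ envelopingSemigroup G M := by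
  have hmaps : MapsTo (· ∘ q) (MulAction.orbit G id) (envelopingSemigroup G M) := by
    rintro _ ⟨g, rfl⟩
    exact smul_mem g hq
  exact isClosed_closure.closure_subset
    (map_mem_closure (f := (· ∘ q)) (continuous_pi fun x => continuous_apply (q x)) hp hmaps)

variable [ContinuousConstSMul G M]

instance : Monoid (envelopingSemigroup G M) where
  mul p q := ⟨p.1 ∘ q.1, comp_mem p.2 q.2⟩
  one := ⟨id, subset_closure (MulAction.mem_orbit_self id)⟩
  mul_assoc _ _ _ := rfl
  one_mul _ := rfl
  mul_one _ := rfl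

instance : MulAction G (envelopingSemigroup G M) where
  smul g p := ⟨g • p.1, smul_mem g p.2⟩
  one_smul p := Subtype.ext (one_smul G p.1)
  mul_smul g h p := Subtype.ext (mul_smul g h p.1)

instance : IsScalarTower G (envelopingSemigroup G M) (envelopingSemigroup G M) :=
  ⟨fun _ _ _ => rfl⟩

instance [TopologicalSpace G] [ContinuousSMul G M] :
    ContinuousSMul G (envelopingSemigroup G M) :=
  Topology.IsInducing.subtypeVal.continuousSMul continuous_id rfl

instance [CompactSpace M] : CompactSpace (envelopingSemigroup G M) :=
  isCompact_iff_compactSpace.mp isClosed_closure.isCompact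

theorem continuous_mul_right (r : envelopingSemigroup G M) : Continuous (· * r) :=
  ((continuous_pi fun x => continuous_apply (r.1 x)).comp continuous_subtype_val).subtype_mk _

theorem dense_orbit_one : Dense (MulAction.orbit G (1 : envelopingSemigroup G M)) := by
  refine Topology.IsInducing.subtypeVal.dense_iff.2 fun p => closure_mono ?_ p.2
  rintro _ ⟨g, rfl⟩
  exact ⟨g • (1 : envelopingSemigroup G M), ⟨g, rfl⟩, rfl⟩

end envelopingSemigroup

end Enveloping

theorem injective_of_universal_minimal {G : Type*} [Monoid G] [TopologicalSpace G] {M : Type v}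
    [TopologicalSpace M] [CompactSpace M] [T2Space M] [Nonempty M] [MulAction G M]
    [ContinuousSMul G M]
    (hmin : ∀ A : Set M, A.Nonempty → IsClosed A →
      (∀ (g : G), ∀ x ∈ A, g • x ∈ A) → A = Set.univ)
    (huniv : ∀ (Y : Type v) [TopologicalSpace Y] [CompactSpace Y] [T2Space Y]
      [MulAction G Y] [ContinuousSMul G Y], Nonempty Y →
      ∃ f : M → Y, Continuous f ∧ ∀ (g : G) (x : M), f (g • x) = g • f x)
    {φ : M → M} (hφ : Continuous φ) (hφG : ∀ (g : G) (x : M), φ (g • x) = g • φ x) :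
    Injective φ := by
  obtain ⟨I, hI⟩ := exists_isMinimalLeftIdeal
    (envelopingSemigroup.continuous_mul_right (G := G) (M := M))
  let J := hI.toSubMulAction G
  have : CompactSpace J :=
    isCompact_iff_compactSpace.mp (hI.isCompact envelopingSemigroup.continuous_mul_right)
  have : Nonempty J := hI.1.to_subtype
  obtain ⟨x₀⟩ := ‹Nonempty M›
  let ev : J → M := fun q => q.1.1 x₀
  have hev : Continuous ev :=
    (continuous_apply x₀).comp (continuous_subtype_val.comp continuous_subtype_val)
  have hevG (g : G) (q : J) : ev (g • q) = g • ev q := rfl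
  obtain ⟨χ, hχ, hχG⟩ := huniv J ‹_›
  have hendo : Injective (χ ∘ φ ∘ ev) :=
    hI.injective_of_equivariant envelopingSemigroup.continuous_mul_right
      envelopingSemigroup.dense_orbit_one _ (hχ.comp (hφ.comp hev)) fun g q => by
        simp only [comp_apply, hevG, hφG, hχG]
  exact hendo.of_comp.of_comp_right (surjective_of_equivariant_of_minimal hmin hev hevG)

theorem statement8_general (G : Type u) [Group G] [TopologicalSpace G]
    (M : Type v) [TopologicalSpace M] [CompactSpace M] [T2Space M] [Nonempty M]
    [MulAction G M] [ContinuousSMul G M]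
    (M' : Type v) [TopologicalSpace M'] [CompactSpace M'] [T2Space M'] [Nonempty M']
    [MulAction G M'] [ContinuousSMul G M']
    (hmin : ∀ A : Set M, A.Nonempty → IsClosed A →
      (∀ (g : G), ∀ x ∈ A, g • x ∈ A) → A = Set.univ)
    (huniv : ∀ (Y : Type v) [TopologicalSpace Y] [CompactSpace Y] [T2Space Y]
      [MulAction G Y] [ContinuousSMul G Y], Nonempty Y →
      ∃ f : M → Y, Continuous f ∧ ∀ (g : G) (x : M), f (g • x) = g • f x)
    (hmin' : ∀ A : Set M', A.Nonempty → IsClosed A →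
      (∀ (g : G), ∀ x ∈ A, g • x ∈ A) → A = Set.univ)
    (huniv' : ∀ (Y : Type v) [TopologicalSpace Y] [CompactSpace Y] [T2Space Y]
      [MulAction G Y] [ContinuousSMul G Y], Nonempty Y →
      ∃ f : M' → Y, Continuous f ∧ ∀ (g : G) (x : M'), f (g • x) = g • f x) :
    ∃ e : M ≃ₜ M', ∀ (g : G) (x : M), e (g • x) = g • e x := by
  obtain ⟨f, hf, hfG⟩ := huniv M' ‹_›
  obtain ⟨f', hf', hf'G⟩ := huniv' M ‹_›
  have hinj : Injective f := (injective_of_universal_minimal hmin huniv (hf'.comp hf)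
    fun g x => by simp only [comp_apply, hfG, hf'G]).of_comp
  have hsurj : Surjective f := surjective_of_equivariant_of_minimal hmin' hf hfG
  exact ⟨hf.homeoOfEquivCompactToT2 (f := Equiv.ofBijective f ⟨hinj, hsurj⟩), hfG⟩

/-- Any two universal minimal compact `G`-spaces are isomorphic via a `G`-equivariant
homeomorphism. -/
theorem statement8 (G : Type u) [Group G] [TopologicalSpace G] [IsTopologicalGroup G]
    (M : Type v) [TopologicalSpace M] [CompactSpace M] [T2Space M] [Nonempty M]
    [MulAction G M] [ContinuousSMul G M]
    (M' : Type v) [TopologicalSpace M'] [CompactSpace M'] [T2Space M'] [Nonempty M']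
    [MulAction G M'] [ContinuousSMul G M']
    (hmin : ∀ A : Set M, A.Nonempty → IsClosed A →
      (∀ (g : G), ∀ x ∈ A, g • x ∈ A) → A = Set.univ)
    (huniv : ∀ (Y : Type v) [TopologicalSpace Y] [CompactSpace Y] [T2Space Y]
      [MulAction G Y] [ContinuousSMul G Y], Nonempty Y →
      ∃ f : M → Y, Continuous f ∧ ∀ (g : G) (x : M), f (g • x) = g • f x)
    (hmin' : ∀ A : Set M', A.Nonempty → IsClosed A →
      (∀ (g : G), ∀ x ∈ A, g • x ∈ A) → A = Set.univ)
    (huniv' : ∀ (Y : Type v) [TopologicalSpace Y] [CompactSpace Y] [T2Space Y]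
      [MulAction G Y] [ContinuousSMul G Y], Nonempty Y →
      ∃ f : M' → Y, Continuous f ∧ ∀ (g : G) (x : M'), f (g • x) = g • f x) :
    ∃ e : M ≃ₜ M', ∀ (g : G) (x : M), e (g • x) = g • e x :=
  statement8_general G M M' hmin huniv hmin' huniv'
end

section
/- Let G be a topological group, let (X, e) be a greatest ambit for G, and for each y ∈ X let r_y : X → X denote the unique G-map with r_y(e) = y. Let A be a nonempty closed subset of X. Then A is G-invariant (g·a ∈ A for all g ∈ G, a ∈ A) if and only if A is a left ideal for the multiplication x·y := r_y(x), i.e. r_a(x) ∈ A for all a ∈ A and x ∈ X. -/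
universe u v

/-!
A closed `G`-invariant set `A ∋ a` is itself a compact Hausdorff `G`-space, so the universal
property gives a `G`-map `X → A` sending `e` to `a`; by uniqueness of `G`-maps `X → X` with
`e ↦ a`, this map is `r_a`, whence `r_a X ⊆ A`. Conversely `r_a (g • e) = g • a`.
-/

def SubMulAction.ofInvariant {G X : Type*} [Monoid G] [MulAction G X] (A : Set X)
    (hinv : ∀ (g : G), ∀ a ∈ A, g • a ∈ A) : SubMulAction G X where
  carrier := A
  smul_mem' g _ ha := hinv g _ ha

theorem exists_equivariant_map_into_of_isClosed_invariant
    {G : Type u} [Group G] [TopologicalSpace G]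
    {X : Type v} [TopologicalSpace X] [CompactSpace X] [T2Space X]
    [MulAction G X] [ContinuousSMul G X] {e : X}
    (hambit : ∀ (Y : Type v) [TopologicalSpace Y] [CompactSpace Y] [T2Space Y]
      [MulAction G Y] [ContinuousSMul G Y] (y : Y),
      ∃ f : X → Y, Continuous f ∧ (∀ (g : G) (x : X), f (g • x) = g • f x) ∧ f e = y)
    {A : Set X} (hAc : IsClosed A) (hinv : ∀ (g : G), ∀ a ∈ A, g • a ∈ A)
    {a : X} (ha : a ∈ A) :
    ∃ f : X → X,
      (Continuous f ∧ (∀ (g : G) (x : X), f (g • x) = g • f x) ∧ f e = a) ∧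
        ∀ x, f x ∈ A := by
  let p := SubMulAction.ofInvariant A hinv
  have : CompactSpace p := isCompact_iff_compactSpace.mp hAc.isCompact
  obtain ⟨f, hf_cont, hf_equiv, hf_e⟩ := hambit p ⟨a, ha⟩
  refine ⟨fun x => f x, ⟨continuous_subtype_val.comp hf_cont, fun g x => ?_, ?_⟩,
    fun x => (f x).2⟩
  · simp only [hf_equiv, SubMulAction.val_smul]
  · simp only [hf_e]

theorem statement12_general (G : Type u) [Group G] [TopologicalSpace G]
    (X : Type v) [TopologicalSpace X] [CompactSpace X] [T2Space X]
    [MulAction G X] [ContinuousSMul G X] (e : X)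
    (hambit : ∀ (Y : Type v) [TopologicalSpace Y] [CompactSpace Y] [T2Space Y]
      [MulAction G Y] [ContinuousSMul G Y] (y : Y),
      ∃! f : X → Y, Continuous f ∧ (∀ (g : G) (x : X), f (g • x) = g • f x) ∧ f e = y)
    (r : X → X → X)
    (hr : ∀ y : X, Continuous (r y) ∧
      (∀ (g : G) (x : X), r y (g • x) = g • r y x) ∧ r y e = y)
    (A : Set X) (hAc : IsClosed A) :
    (∀ (g : G), ∀ a ∈ A, g • a ∈ A) ↔ (∀ a ∈ A, ∀ x : X, r a x ∈ A) := by
  have r_smul_e (a : X) (g : G) : r a (g • e) = g • a := by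
    rw [(hr a).2.1, (hr a).2.2]
  refine ⟨fun hinv a ha x => ?_, fun hideal g a ha => r_smul_e a g ▸ hideal a ha (g • e)⟩
  obtain ⟨f, hf, hfA⟩ :=
    exists_equivariant_map_into_of_isClosed_invariant (fun Y _ _ _ _ _ y => (hambit Y y).exists)
      hAc hinv ha
  exact (hambit X a).unique hf (hr a) ▸ hfA x

/-- A nonempty closed subset of the greatest ambit `(X, e)` is `G`-invariant if and only if
it is a left ideal for the multiplication `x · y := r_y x`. -/
theorem statement12 (G : Type u) [Group G] [TopologicalSpace G] [IsTopologicalGroup G]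
    (X : Type v) [TopologicalSpace X] [CompactSpace X] [T2Space X] [Nonempty X]
    [MulAction G X] [ContinuousSMul G X] (e : X)
    (hambit : ∀ (Y : Type v) [TopologicalSpace Y] [CompactSpace Y] [T2Space Y]
      [MulAction G Y] [ContinuousSMul G Y] (y : Y),
      ∃! f : X → Y, Continuous f ∧ (∀ (g : G) (x : X), f (g • x) = g • f x) ∧ f e = y)
    (r : X → X → X)
    (hr : ∀ y : X, Continuous (r y) ∧
      (∀ (g : G) (x : X), r y (g • x) = g • r y x) ∧ r y e = y)
    (A : Set X) (hA : A.Nonempty) (hAc : IsClosed A) :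
    (∀ (g : G), ∀ a ∈ A, g • a ∈ A) ↔ (∀ a ∈ A, ∀ x : X, r a x ∈ A) :=
  statement12_general G X e hambit r hr A hAc
end

section
/- Let G be a topological group, let (X, e) be a greatest ambit for G, and for each y ∈ X let r_y : X → X denote the unique G-map with r_y(e) = y. Let M be a nonempty closed G-invariant subset of X that is minimal (has no proper nonempty closed G-invariant subset). Then there exists p ∈ M such that r_p(p) = p (p is an idempotent), the image r_p(X) equals M, and r_p(x) = x for every x ∈ M; in particular r_p is a G-equivariant retraction of X onto M. -/
/-!
By uniqueness in the universal property, `r y ∘ r z = r (r y z)`, so `x * y := r y x` makes `X`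
a compact Hausdorff semigroup in which right multiplications are continuous. For `y ∈ M` the
range of `r y` is a closed invariant subset of `M` containing `y`, hence equal to `M`; thus `M`
is a closed subsemigroup, and the Ellis–Numakura lemma gives an idempotent `p ∈ M`. Since
`r p ∘ r p = r (r p p) = r p`, the map `r p` fixes its range `M` pointwise.
-/

universe u v

open Set

instance SubMulAction.continuousSMul {G X : Type*} [TopologicalSpace G] [TopologicalSpace X]
    [SMul G X] [ContinuousSMul G X] (S : SubMulAction G X) : ContinuousSMul G S :=
  ⟨(continuous_fst.smul (continuous_subtype_val.comp continuous_snd)).subtype_mk _⟩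

theorem exists_mem_idempotent_of_assoc {X : Type*} [TopologicalSpace X] [T2Space X]
    (r : X → X → X) (hcont : ∀ y, Continuous (r y))
    (hassoc : ∀ x y z, r x (r y z) = r (r x y) z) {S : Set X} (hS : IsCompact S)
    (hne : S.Nonempty) (hmul : ∀ x ∈ S, ∀ y ∈ S, r x y ∈ S) : ∃ p ∈ S, r p p = p := by
  let : Semigroup X := { mul := fun x y => r y x, mul_assoc := fun x y z => hassoc z y x }
  exact exists_idempotent_in_compact_subsemigroup hcont S hne hS fun x hx y hy => hmul y hy x hx

def IsGreatestAmbit (G : Type u) [Monoid G] [TopologicalSpace G] {X : Type v}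
    [TopologicalSpace X] [MulAction G X] (e : X) : Prop :=
  ∀ (Y : Type v) [TopologicalSpace Y] [CompactSpace Y] [T2Space Y]
    [MulAction G Y] [ContinuousSMul G Y] (y : Y),
    ∃! f : X → Y, Continuous f ∧ (∀ (g : G) (x : X), f (g • x) = g • f x) ∧ f e = y

namespace IsGreatestAmbit

variable {G : Type u} [Monoid G] [TopologicalSpace G] {X : Type v} [TopologicalSpace X]
  [MulAction G X] {e : X}

section Maps

variable {Y : Type v} [TopologicalSpace Y] [CompactSpace Y] [T2Space Y] [MulAction G Y]
  [ContinuousSMul G Y] {f f' : X → Y}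

theorem eq_of_apply_eq (hambit : IsGreatestAmbit G e) (hf : Continuous f)
    (hf_smul : ∀ (g : G) x, f (g • x) = g • f x)
    (hf' : Continuous f') (hf'_smul : ∀ (g : G) x, f' (g • x) = g • f' x) (h : f e = f' e) :
    f = f' :=
  (hambit Y (f e)).unique ⟨hf, hf_smul, rfl⟩ ⟨hf', hf'_smul, h.symm⟩

theorem range_subset (hambit : IsGreatestAmbit G e) (hf : Continuous f)
    (hf_smul : ∀ (g : G) x, f (g • x) = g • f x)
    {S : Set Y} (hS : IsClosed S) (hS_smul : ∀ (g : G), ∀ y ∈ S, g • y ∈ S)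
    (he : f e ∈ S) :
    range f ⊆ S := by
  let S' : SubMulAction G Y := ⟨S, fun g {y} hy => hS_smul g y hy⟩
  have : CompactSpace S' := isCompact_iff_compactSpace.mp hS.isCompact
  obtain ⟨h, ⟨hh, hh_smul, hh_e⟩, -⟩ := hambit S' ⟨f e, he⟩
  have hf_eq : f = (↑) ∘ h :=
    hambit.eq_of_apply_eq hf hf_smul (continuous_subtype_val.comp hh)
      (fun g x => by simp [hh_smul]) (by simp [hh_e])
  rw [hf_eq]
  rintro _ ⟨x, rfl⟩
  exact (h x).2

theorem range_eq_of_minimal [CompactSpace X] (hambit : IsGreatestAmbit G e) (hf : Continuous f)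
    (hf_smul : ∀ (g : G) x, f (g • x) = g • f x) {M : Set Y} (hMc : IsClosed M)
    (hM_smul : ∀ (g : G), ∀ y ∈ M, g • y ∈ M)
    (hMmin : ∀ Z : Set Y, Z ⊆ M → Z.Nonempty → IsClosed Z →
      (∀ (g : G), ∀ y ∈ Z, g • y ∈ Z) → Z = M) (he : f e ∈ M) :
    range f = M := by
  refine hMmin _ (hambit.range_subset hf hf_smul hMc hM_smul he) ⟨f e, mem_range_self e⟩
    (isCompact_range hf).isClosed ?_
  rintro g _ ⟨x, rfl⟩
  exact ⟨g • x, hf_smul g x⟩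

end Maps

variable [CompactSpace X] [T2Space X] [ContinuousSMul G X] {r : X → X → X}

theorem apply_apply (hambit : IsGreatestAmbit G e)
    (hr : ∀ y : X, Continuous (r y) ∧
      (∀ (g : G) (x : X), r y (g • x) = g • r y x) ∧ r y e = y)
    (y z x : X) : r y (r z x) = r (r y z) x := by
  have h : r y ∘ r z = r (r y z) :=
    hambit.eq_of_apply_eq ((hr y).1.comp (hr z).1)
      (fun g x => by simp only [Function.comp_apply, (hr z).2.1, (hr y).2.1])
      (hr _).1 (hr _).2.1 (by simp only [Function.comp_apply, (hr z).2.2, (hr _).2.2])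
  exact congrFun h x

end IsGreatestAmbit

theorem statement13_general (G : Type u) [Group G] [TopologicalSpace G]
    (X : Type v) [TopologicalSpace X] [CompactSpace X] [T2Space X]
    [MulAction G X] [ContinuousSMul G X] (e : X)
    (hambit : ∀ (Y : Type v) [TopologicalSpace Y] [CompactSpace Y] [T2Space Y]
      [MulAction G Y] [ContinuousSMul G Y] (y : Y),
      ∃! f : X → Y, Continuous f ∧ (∀ (g : G) (x : X), f (g • x) = g • f x) ∧ f e = y)
    (r : X → X → X)
    (hr : ∀ y : X, Continuous (r y) ∧
      (∀ (g : G) (x : X), r y (g • x) = g • r y x) ∧ r y e = y)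
    (M : Set X) (hMne : M.Nonempty) (hMc : IsClosed M)
    (hMinv : ∀ (g : G), ∀ x ∈ M, g • x ∈ M)
    (hMmin : ∀ Z : Set X, Z ⊆ M → Z.Nonempty → IsClosed Z →
      (∀ (g : G), ∀ x ∈ Z, g • x ∈ Z) → Z = M) :
    ∃ p ∈ M, r p p = p ∧ Set.range (r p) = M ∧ ∀ x ∈ M, r p x = x := by
  have hambit' : IsGreatestAmbit G e := hambit
  have hrange : ∀ y ∈ M, range (r y) = M := fun y hy =>
    hambit'.range_eq_of_minimal (hr y).1 (hr y).2.1 hMc hMinv hMmin ((hr y).2.2.symm ▸ hy)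
  obtain ⟨p, hpM, hpp⟩ :=
    exists_mem_idempotent_of_assoc r (fun y => (hr y).1) (hambit'.apply_apply hr)
      hMc.isCompact hMne fun y hy x _ => hrange y hy ▸ mem_range_self x
  refine ⟨p, hpM, hpp, hrange p hpM, fun x hx => ?_⟩
  obtain ⟨z, rfl⟩ := (hrange p hpM).symm ▸ hx
  rw [hambit'.apply_apply hr, hpp]

/-- If `M` is a minimal closed `G`-invariant subset of the greatest ambit `(X, e)`, then
there is an idempotent `p ∈ M` such that `r_p` is a `G`-equivariant retraction of `X`
onto `M`. -/
theorem statement13 (G : Type u) [Group G] [TopologicalSpace G] [IsTopologicalGroup G]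
    (X : Type v) [TopologicalSpace X] [CompactSpace X] [T2Space X] [Nonempty X]
    [MulAction G X] [ContinuousSMul G X] (e : X)
    (hambit : ∀ (Y : Type v) [TopologicalSpace Y] [CompactSpace Y] [T2Space Y]
      [MulAction G Y] [ContinuousSMul G Y] (y : Y),
      ∃! f : X → Y, Continuous f ∧ (∀ (g : G) (x : X), f (g • x) = g • f x) ∧ f e = y)
    (r : X → X → X)
    (hr : ∀ y : X, Continuous (r y) ∧
      (∀ (g : G) (x : X), r y (g • x) = g • r y x) ∧ r y e = y)
    (M : Set X) (hMne : M.Nonempty) (hMc : IsClosed M)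
    (hMinv : ∀ (g : G), ∀ x ∈ M, g • x ∈ M)
    (hMmin : ∀ Z : Set X, Z ⊆ M → Z.Nonempty → IsClosed Z →
      (∀ (g : G), ∀ x ∈ Z, g • x ∈ Z) → Z = M) :
    ∃ p ∈ M, r p p = p ∧ Set.range (r p) = M ∧ ∀ x ∈ M, r p x = x :=
  statement13_general G X e hambit r hr M hMne hMc hMinv hMmin
end
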